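/- arXiv:1307.7441 — 6 statements merged into one kernel-verified Lean document; each statement's English description precedes it below -/
import Mathlib

section
/- Let (E, #, ≤, l, ◁) be a prioritized Prime Event Structure and define ◁' = ◁ ∖ { (e,e') | e' # e ∨ e' ≤ e ∨ e ≤ e' }. Then the traces of (E, #, ≤, l, ◁) equal the traces of (E, #, ≤, l, ◁'). -/
/-- Enabled events of a Prime Event Structure after the sequence `σ`:
events not yet occurred, all of whose strict `le`-predecessors occurred,
and not in conflict with any occurred event. -/
def pen {E : Type*} (conf le : E → E → Prop) (σ : List E) : Set E :=
  {e | e ∉ σ ∧ (∀ e', le e' e → e' ≠ e → e' ∈ σ) ∧ ¬ ∃ e' ∈ σ, conf e e'}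

/-- `σ` is a trace w.r.t. the enabling function `en`. -/
def IsTrace {E : Type*} (en : List E → Set E) (σ : List E) : Prop :=
  ∀ i : Fin σ.length, σ.get i ∈ en (σ.take i)

/-- The priority condition on a sequence `σ`: whenever two distinct events of `σ`
are enabled together after some prefix and are related by priority, the
higher-priority one occurs first. -/
def PrioOK {E : Type*} (en : List E → Set E) (prio : E → E → Prop) (σ : List E) : Prop :=
  ∀ i, i < σ.length → ∀ j h : Fin σ.length,
    σ.get j ≠ σ.get h → σ.get j ∈ en (σ.take i) → σ.get h ∈ en (σ.take i) →
    prio (σ.get h) (σ.get j) → (j : ℕ) < h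


/-!
A dropped priority pair never constrains a trace. Two distinct events enabled after the same
prefix cannot be causally related, since the smaller one would already have to occur in that
prefix. And if `e` is in conflict with `e'` in a trace, `e` cannot come after `e'`, since it
would not be enabled, so the trace orders them as the priority demands anyway.
-/

theorem PrioOK.mono {E : Type*} {en : List E → Set E} {p q : E → E → Prop}
    (hpq : ∀ e e', p e e' → q e e') {σ : List E} (h : PrioOK en q σ) : PrioOK en p σ :=
  fun i hi j k hne hj hk hp => h i hi j k hne hj hk (hpq _ _ hp)

section pen

variable {E : Type*} {conf le : E → E → Prop}

theorem not_le_of_mem_pen {τ : List E} {e e' : E} (he : e ∈ pen conf le τ)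
    (he' : e' ∈ pen conf le τ) (hne : e ≠ e') : ¬ le e e' :=
  fun hle => he.1 (he'.2.1 e hle hne)

theorem IsTrace.not_conf_get_of_lt {σ : List E} (hσ : IsTrace (pen conf le) σ)
    {a b : Fin σ.length} (hab : (a : ℕ) < b) : ¬ conf (σ.get b) (σ.get a) := by
  have hmem : σ.get a ∈ σ.take b := List.mem_take_iff_getElem.2 ⟨a, by omega, rfl⟩
  exact fun hc => (hσ b).2.2 ⟨σ.get a, hmem, hc⟩

theorem IsTrace.prioOK_of_prioOK_reduced {σ : List E} (hσ : IsTrace (pen conf le) σ)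
    {prio : E → E → Prop}
    (h : PrioOK (pen conf le) (fun e e' => prio e e' ∧ ¬ (conf e' e ∨ le e' e ∨ le e e')) σ) :
    PrioOK (pen conf le) prio σ := by
  intro i hi j k hne hj hk hp
  by_cases hdropped : conf (σ.get j) (σ.get k) ∨ le (σ.get j) (σ.get k) ∨ le (σ.get k) (σ.get j)
  · rcases hdropped with hconf | hle | hle
    · have hjk : (j : ℕ) ≤ k := le_of_not_gt fun hkj => hσ.not_conf_get_of_lt hkj hconf
      exact lt_of_le_of_ne hjk fun heq => hne (congrArg σ.get (Fin.ext heq))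
    · exact absurd hle (not_le_of_mem_pen hj hk hne)
    · exact absurd hle (not_le_of_mem_pen hk hj (Ne.symm hne))
  · exact h i hi j k hne hj hk ⟨hp, hdropped⟩

end pen

theorem ppes_priority_reduction_general {E : Type*} (conf le : E → E → Prop) (prio : E → E → Prop) :
    {σ : List E | IsTrace (pen conf le) σ ∧ PrioOK (pen conf le) prio σ} =
      {σ : List E | IsTrace (pen conf le) σ ∧
        PrioOK (pen conf le)
          (fun e e' => prio e e' ∧ ¬ (conf e' e ∨ le e' e ∨ le e e')) σ} := by
  ext σ
  exact ⟨fun ⟨hσ, hprio⟩ => ⟨hσ, hprio.mono fun _ _ hp => hp.1⟩,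
    fun ⟨hσ, hprio⟩ => ⟨hσ, hσ.prioOK_of_prioOK_reduced hprio⟩⟩

/-- dropping priority pairs between conflicting events or events related by
the enabling partial order does not change the traces of a prioritized Prime ES. -/
theorem ppes_priority_reduction {E : Type*} (conf le : E → E → Prop) (prio : E → E → Prop)
    (hirr : ∀ e, ¬ conf e e) (hsym : ∀ e e', conf e e' → conf e' e)
    (hrefl : ∀ e, le e e) (htrans : ∀ e1 e2 e3, le e1 e2 → le e2 e3 → le e1 e3)
    (hanti : ∀ e1 e2, le e1 e2 → le e2 e1 → e1 = e2)
    (hher : ∀ e e' e'', conf e e' → le e' e'' → conf e e'')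
    (hfin : ∀ e, {e' | le e' e}.Finite)
    (hacyc : ∀ e, ¬ Relation.TransGen prio e e) :
    {σ : List E | IsTrace (pen conf le) σ ∧ PrioOK (pen conf le) prio σ} =
      {σ : List E | IsTrace (pen conf le) σ ∧
        PrioOK (pen conf le)
          (fun e e' => prio e e' ∧ ¬ (conf e' e ∨ le e' e ∨ le e e')) σ} :=
  ppes_priority_reduction_general conf le prio
end

section
/- Let β = (E, #, ↦, l) be a Bundle Event Structure and e, e' ∈ E such that there exists X ⊆ E with e ∈ X and X ↦ e'. Then for every trace σ = e₁⋯eₙ of β, there is no index i < n such that both e and e' belong to en(β, σᵢ). (An event and a member of one of its bundle sets can never be enabled together.) -/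
/-- Enabled events of a Bundle Event Structure after the sequence `σ`. -/
def ben {E : Type*} (conf : E → E → Prop) (bund : Set E → E → Prop) (σ : List E) : Set E :=
  {e | e ∉ σ ∧ (∀ X, bund X e → ∃ x ∈ X, x ∈ σ) ∧ ¬ ∃ e' ∈ σ, conf e e'}

theorem not_mem_ben_of_mem_bundle {E : Type*} {conf : E → E → Prop} {bund : Set E → E → Prop}
    {X : Set E} {e e' : E} {σ : List E} (hX : X.Pairwise conf) (heX : e ∈ X)
    (hbund : bund X e') (he' : e' ∈ ben conf bund σ) : e ∉ ben conf bund σ := by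
  rintro ⟨heσ, -, hconf⟩
  obtain ⟨x, hxX, hxσ⟩ := he'.2.1 X hbund
  rcases eq_or_ne e x with rfl | hex
  · exact heσ hxσ
  · exact hconf ⟨x, hxσ, hX heX hxX hex⟩

theorem bes_bundle_necessary_cause_general {E : Type*} (conf : E → E → Prop)
    (bund : Set E → E → Prop)
    (hstab : ∀ X e, bund X e → ∀ e1 ∈ X, ∀ e2 ∈ X, e1 ≠ e2 → conf e1 e2)
    (e e' : E) (X : Set E) (heX : e ∈ X) (hbund : bund X e')
    (σ : List E) :
    ∀ i, i < σ.length →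
      ¬ (e ∈ ben conf bund (σ.take i) ∧ e' ∈ ben conf bund (σ.take i)) :=
  fun _ _ ⟨he, he'⟩ => not_mem_ben_of_mem_bundle (hstab X e' hbund) heX hbund he' he

/-- in a Bundle Event Structure, an event and a member of one of its
bundle sets are never enabled together along a trace. -/
theorem bes_bundle_necessary_cause {E : Type*} (conf : E → E → Prop)
    (bund : Set E → E → Prop)
    (hirr : ∀ e, ¬ conf e e) (hsym : ∀ e e', conf e e' → conf e' e)
    (hstab : ∀ X e, bund X e → ∀ e1 ∈ X, ∀ e2 ∈ X, e1 ≠ e2 → conf e1 e2)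
    (e e' : E) (X : Set E) (heX : e ∈ X) (hbund : bund X e')
    (σ : List E) (htr : IsTrace (ben conf bund) σ) :
    ∀ i, i < σ.length →
      ¬ (e ∈ ben conf bund (σ.take i) ∧ e' ∈ ben conf bund (σ.take i)) :=
  bes_bundle_necessary_cause_general conf bund hstab e e' X heX hbund σ
end

section
/- Let (β, ◁) = (E, #, ↦, l, ◁) be a prioritized Bundle Event Structure and define ◁' = ◁ ∖ { (e,e'), (e',e) | e # e' ∨ ∃X ⊆ E, e ∈ X ∧ X ↦ e' }. Then the traces of (β, ◁) equal the traces of (β, ◁'). (Priority pairs between conflicting events or between an event and a member of one of its bundle sets are redundant.) -/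
/-! Both priority relations order the same pairs of a trace: a pair of distinct events that
are enabled together after some prefix of a trace is never in conflict (the later event
would be disabled by the earlier), and neither lies in a bundle set of the other (the
bundle would already be satisfied by a prefix event, which by stability must be the
other, not yet occurred, event). -/

lemma List.exists_get_eq_and_mem_take_of_ne {α : Type*} {l : List α} {a b : α}
    (ha : a ∈ l) (hb : b ∈ l) (hab : a ≠ b) :
    ∃ i : Fin l.length, (l.get i = a ∧ b ∈ l.take i) ∨ (l.get i = b ∧ a ∈ l.take i) := by
  obtain ⟨p, rfl⟩ := List.get_of_mem ha
  obtain ⟨q, rfl⟩ := List.get_of_mem hb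
  have hpq : (p : ℕ) ≠ q := fun h => hab (congrArg l.get (Fin.ext h))
  rcases Nat.lt_or_gt_of_ne hpq with hlt | hlt
  · exact ⟨q, .inr ⟨rfl, List.mem_take_iff_getElem.mpr ⟨p, by omega, rfl⟩⟩⟩
  · exact ⟨p, .inl ⟨rfl, List.mem_take_iff_getElem.mpr ⟨q, by omega, rfl⟩⟩⟩

section Trace

variable {E : Type*} {conf : E → E → Prop} {bund : Set E → E → Prop} {σ : List E}

lemma IsTrace.not_conf (hsym : ∀ e e', conf e e' → conf e' e)
    (ht : IsTrace (ben conf bund) σ) {a b : E} (ha : a ∈ σ) (hb : b ∈ σ) (hab : a ≠ b) :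
    ¬ conf a b := by
  intro hc
  obtain ⟨i, ⟨rfl, hbi⟩ | ⟨rfl, hai⟩⟩ := List.exists_get_eq_and_mem_take_of_ne ha hb hab
  · exact (ht i).2.2 ⟨b, hbi, hc⟩
  · exact (ht i).2.2 ⟨a, hai, hsym _ _ hc⟩

lemma IsTrace.eq_of_mem_bundle (hsym : ∀ e e', conf e e' → conf e' e)
    (hstab : ∀ X e, bund X e → ∀ e1 ∈ X, ∀ e2 ∈ X, e1 ≠ e2 → conf e1 e2)
    (ht : IsTrace (ben conf bund) σ) {X : Set E} {e a b : E} (hX : bund X e)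
    (haX : a ∈ X) (hbX : b ∈ X) (ha : a ∈ σ) (hb : b ∈ σ) : a = b := by
  by_contra hab
  exact ht.not_conf hsym ha hb hab (hstab X e hX a haX b hbX hab)

lemma IsTrace.not_mem_bundle_of_mem_ben (hsym : ∀ e e', conf e e' → conf e' e)
    (hstab : ∀ X e, bund X e → ∀ e1 ∈ X, ∀ e2 ∈ X, e1 ≠ e2 → conf e1 e2)
    (ht : IsTrace (ben conf bund) σ) {i : ℕ} {X : Set E} {e a : E} (hX : bund X e)
    (he : e ∈ ben conf bund (σ.take i)) (ha : a ∈ ben conf bund (σ.take i)) (haσ : a ∈ σ) :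
    a ∉ X := by
  intro haX
  obtain ⟨x, hxX, hxi⟩ := he.2.1 X hX
  have hxa : x = a := ht.eq_of_mem_bundle hsym hstab hX hxX haX (List.mem_of_mem_take hxi) haσ
  exact ha.1 (hxa ▸ hxi)

lemma IsTrace.not_related_of_mem_ben (hsym : ∀ e e', conf e e' → conf e' e)
    (hstab : ∀ X e, bund X e → ∀ e1 ∈ X, ∀ e2 ∈ X, e1 ≠ e2 → conf e1 e2)
    (ht : IsTrace (ben conf bund) σ) {i : ℕ} {a b : E} (ha : a ∈ σ) (hb : b ∈ σ) (hab : a ≠ b)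
    (hai : a ∈ ben conf bund (σ.take i)) (hbi : b ∈ ben conf bund (σ.take i)) :
    ¬ (conf a b ∨ conf b a ∨ (∃ X, a ∈ X ∧ bund X b) ∨ (∃ X, b ∈ X ∧ bund X a)) := by
  rintro (hc | hc | ⟨X, haX, hX⟩ | ⟨X, hbX, hX⟩)
  · exact ht.not_conf hsym ha hb hab hc
  · exact ht.not_conf hsym hb ha (Ne.symm hab) hc
  · exact ht.not_mem_bundle_of_mem_ben hsym hstab hX hbi hai ha haX
  · exact ht.not_mem_bundle_of_mem_ben hsym hstab hX hai hbi hb hbX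

end Trace

lemma PrioOK.of_imp {E : Type*} {en : List E → Set E} {p q : E → E → Prop} {σ : List E}
    (hpq : ∀ i, ∀ a ∈ σ, ∀ b ∈ σ, a ≠ b → a ∈ en (σ.take i) → b ∈ en (σ.take i) → p a b → q a b)
    (hq : PrioOK en q σ) : PrioOK en p σ :=
  fun i hi j h hne hj hh hp =>
    hq i hi j h hne hj hh (hpq i _ (List.get_mem σ h) _ (List.get_mem σ j) (Ne.symm hne) hh hj hp)

theorem pbes_priority_reduction_general {E : Type*} (conf : E → E → Prop) (bund : Set E → E → Prop)
    (prio : E → E → Prop)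
    (hsym : ∀ e e', conf e e' → conf e' e)
    (hstab : ∀ X e, bund X e → ∀ e1 ∈ X, ∀ e2 ∈ X, e1 ≠ e2 → conf e1 e2) :
    {σ : List E | IsTrace (ben conf bund) σ ∧ PrioOK (ben conf bund) prio σ} =
      {σ : List E | IsTrace (ben conf bund) σ ∧
        PrioOK (ben conf bund)
          (fun e e' => prio e e' ∧
            ¬ (conf e e' ∨ conf e' e ∨ (∃ X, e ∈ X ∧ bund X e') ∨
               (∃ X, e' ∈ X ∧ bund X e))) σ} := by
  ext σ
  refine and_congr_right fun ht => ⟨PrioOK.of_imp fun _ _ _ _ _ _ _ _ hp => hp.1, ?_⟩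
  exact PrioOK.of_imp fun _ a ha b hb hab hai hbi hp =>
    ⟨hp, ht.not_related_of_mem_ben hsym hstab ha hb hab hai hbi⟩

/-- priority pairs between conflicting events, or between an event and a
member of one of its bundle sets, are redundant in a prioritized BES. -/
theorem pbes_priority_reduction {E : Type*} (conf : E → E → Prop) (bund : Set E → E → Prop)
    (prio : E → E → Prop)
    (hirr : ∀ e, ¬ conf e e) (hsym : ∀ e e', conf e e' → conf e' e)
    (hstab : ∀ X e, bund X e → ∀ e1 ∈ X, ∀ e2 ∈ X, e1 ≠ e2 → conf e1 e2)
    (hacyc : ∀ e, ¬ Relation.TransGen prio e e) :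
    {σ : List E | IsTrace (ben conf bund) σ ∧ PrioOK (ben conf bund) prio σ} =
      {σ : List E | IsTrace (ben conf bund) σ ∧
        PrioOK (ben conf bund)
          (fun e e' => prio e e' ∧
            ¬ (conf e e' ∨ conf e' e ∨ (∃ X, e ∈ X ∧ bund X e') ∨
               (∃ X, e' ∈ X ∧ bund X e))) σ} :=
  pbes_priority_reduction_general conf bund prio hsym hstab
end

section
/- Let β = (E, #, ↦, l) be a Bundle Event Structure and C a configuration of β. Define e ≺_C e' iff there exists X ⊆ E with e ∈ X and X ↦ e', and let ⪯_C be the reflexive-transitive closure of ≺_C restricted to C. Then ⪯_C is a partial order on C (in particular it is antisymmetric). -/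
/-- Precedence relation of a BES on a configuration `C`:
`e` precedes `e'` if `e` belongs to a bundle set enabling `e'` (restricted to `C`). -/
def precC {E : Type*} (bund : Set E → E → Prop) (C : Set E) (a b : E) : Prop :=
  a ∈ C ∧ b ∈ C ∧ ∃ X, a ∈ X ∧ bund X b

/-- Reflexive-transitive closure of precedence on `C`. -/
def preC {E : Type*} (bund : Set E → E → Prop) (C : Set E) : E → E → Prop :=
  Relation.ReflTransGen (precC bund C)


/-!
Every event `b` of a trace `σ` was enabled by the prefix before it, so each bundle `X ↦ b`
meets that prefix. By stability the events of `X` are pairwise in conflict, and no two events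
of a trace conflict (the later one would not have been enabled), so `X` meets `σ` in at most one
event. Hence if `a ∈ X` occurs in `σ`, it occurs before `b`: precedence strictly increases the
position in `σ`, and its reflexive-transitive closure is antisymmetric.
-/

theorem Relation.ReflTransGen.antisymm_of_map_lt {α β : Type*} [Preorder β] {r : α → α → Prop}
    (f : α → β) (hf : ∀ a b, r a b → f a < f b) {a b : α}
    (hab : ReflTransGen r a b) (hba : ReflTransGen r b a) : a = b := by
  have hlt : ∀ a b, TransGen r a b → f a < f b := fun a b h => by
    simpa [transGen_eq_self] using h.lift f hf
  rcases reflTransGen_iff_eq_or_transGen.1 hab with h | h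
  · exact h.symm
  rcases reflTransGen_iff_eq_or_transGen.1 hba with h' | h'
  · exact h'
  exact absurd ((hlt _ _ h).trans (hlt _ _ h')) (lt_irrefl _)

namespace IsTrace

variable {E : Type*} [DecidableEq E] {σ : List E} {a b : E}

theorem mem_en_take_idxOf {en : List E → Set E} (hσ : IsTrace en σ) (hb : b ∈ σ) :
    b ∈ en (σ.take (σ.idxOf b)) := by
  simpa using hσ ⟨_, List.idxOf_lt_length_iff.2 hb⟩

variable {conf : E → E → Prop} {bund : Set E → E → Prop}

theorem not_conf_of_idxOf_lt (hσ : IsTrace (ben conf bund) σ) (ha : a ∈ σ) (hb : b ∈ σ)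
    (hab : σ.idxOf a < σ.idxOf b) : ¬ conf b a :=
  fun hc => (hσ.mem_en_take_idxOf hb).2.2 ⟨a, (List.mem_take_iff_idxOf_lt ha).2 hab, hc⟩

theorem subsingleton_inter_of_pairwise_conf (hσ : IsTrace (ben conf bund) σ) {X : Set E}
    (hX : X.Pairwise conf) : (X ∩ {e | e ∈ σ}).Subsingleton := by
  rintro a ⟨haX, ha⟩ x ⟨hxX, hx⟩
  by_contra hne
  rcases lt_trichotomy (σ.idxOf a) (σ.idxOf x) with hlt | heq | hgt
  · exact hσ.not_conf_of_idxOf_lt ha hx hlt (hX hxX haX (Ne.symm hne))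
  · exact hne ((List.idxOf_inj ha).1 heq)
  · exact hσ.not_conf_of_idxOf_lt hx ha hgt (hX haX hxX hne)

theorem idxOf_lt_of_mem_bundle (hσ : IsTrace (ben conf bund) σ) {X : Set E}
    (hXconf : X.Pairwise conf) (hX : bund X b) (haX : a ∈ X) (ha : a ∈ σ) (hb : b ∈ σ) :
    σ.idxOf a < σ.idxOf b := by
  obtain ⟨x, hxX, hx⟩ := (hσ.mem_en_take_idxOf hb).2.1 X hX
  obtain rfl : x = a := hσ.subsingleton_inter_of_pairwise_conf hXconf
    ⟨hxX, List.mem_of_mem_take hx⟩ ⟨haX, ha⟩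
  exact (List.mem_take_iff_idxOf_lt ha).1 hx

end IsTrace

theorem bes_precedence_partial_order_general {E : Type*} (conf : E → E → Prop)
    (bund : Set E → E → Prop)
    (hstab : ∀ X e, bund X e → ∀ e1 ∈ X, ∀ e2 ∈ X, e1 ≠ e2 → conf e1 e2)
    (C : Set E) (hC : ∃ σ : List E, IsTrace (ben conf bund) σ ∧ {e | e ∈ σ} = C) :
    (∀ e ∈ C, preC bund C e e) ∧
    (∀ e1 e2 e3, preC bund C e1 e2 → preC bund C e2 e3 → preC bund C e1 e3) ∧
    (∀ e ∈ C, ∀ e' ∈ C, preC bund C e e' → preC bund C e' e → e = e') := by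
  classical
  obtain ⟨σ, hσ, rfl⟩ := hC
  refine ⟨fun _ _ => .refl, fun _ _ _ => .trans, fun _ _ _ _ => ?_⟩
  refine Relation.ReflTransGen.antisymm_of_map_lt σ.idxOf ?_
  rintro a b ⟨ha, hb, X, haX, hX⟩
  exact hσ.idxOf_lt_of_mem_bundle (hstab X b hX) hX haX ha hb

/-- the reflexive-transitive closure of the precedence relation on a
configuration of a BES is a partial order on that configuration. -/
theorem bes_precedence_partial_order {E : Type*} (conf : E → E → Prop)
    (bund : Set E → E → Prop)
    (hirr : ∀ e, ¬ conf e e) (hsym : ∀ e e', conf e e' → conf e' e)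
    (hstab : ∀ X e, bund X e → ∀ e1 ∈ X, ∀ e2 ∈ X, e1 ≠ e2 → conf e1 e2)
    (C : Set E) (hC : ∃ σ : List E, IsTrace (ben conf bund) σ ∧ {e | e ∈ σ} = C) :
    (∀ e ∈ C, preC bund C e e) ∧
    (∀ e1 e2 e3, preC bund C e1 e2 → preC bund C e2 e3 → preC bund C e1 e3) ∧
    (∀ e ∈ C, ∀ e' ∈ C, preC bund C e e' → preC bund C e' e → e = e') :=
  bes_precedence_partial_order_general conf bund hstab C hC
end

section
/- Let (β, ◁) be a prioritized Bundle Event Structure, C a configuration of β with precedence partial order ⪯_C, and define ◁' = ◁ ∖ { (e,e') | e' ⪯_C e ∨ e ⪯_C e' }. Then the set of traces of (β,◁) whose underlying event set equals C is the same as the set of traces of (β,◁') whose underlying event set equals C. -/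
/-!
Priority is only consulted between two events that are enabled at the same time, and two
distinct events related by `⪯_C` never are. Along a trace over `C`, stability lets each bundle
set contain at most one event of `C` (two would be in conflict, and the later one could not
have been enabled), so if `a ≺_C b` then `b` can only become enabled once `a` has occurred.
Hence, when `e ⪯_C b` with `e ≠ b`, the event `b` is enabled only after `e` has occurred, at
which point `e` is no longer enabled. The pairs removed from `◁` therefore never matter.
-/

namespace IsTrace

variable {E : Type*} {conf : E → E → Prop} {bund : Set E → E → Prop} {σ : List E}

theorem not_conf_of_lt (hσ : IsTrace (ben conf bund) σ) {p q : ℕ} (hpq : p < q)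
    (hq : q < σ.length) : ¬ conf σ[q] σ[p] := fun h =>
  (hσ ⟨q, hq⟩).2.2
    ⟨σ[p], List.mem_take_iff_getElem.mpr ⟨p, Nat.lt_min.mpr ⟨hpq, hpq.trans hq⟩, rfl⟩, h⟩

theorem eq_of_mem_of_bundle (hstab : ∀ X e, bund X e → ∀ e1 ∈ X, ∀ e2 ∈ X, e1 ≠ e2 → conf e1 e2)
    (hσ : IsTrace (ben conf bund) σ) {X : Set E} {c x y : E} (hX : bund X c)
    (hx : x ∈ X) (hy : y ∈ X) (hxσ : x ∈ σ) (hyσ : y ∈ σ) : x = y := by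
  by_contra hne
  obtain ⟨p, hp, rfl⟩ := List.getElem_of_mem hxσ
  obtain ⟨q, hq, rfl⟩ := List.getElem_of_mem hyσ
  rcases lt_trichotomy p q with hpq | rfl | hqp
  · exact hσ.not_conf_of_lt hpq hq (hstab X c hX _ hy _ hx (Ne.symm hne))
  · exact hne rfl
  · exact hσ.not_conf_of_lt hqp hp (hstab X c hX _ hx _ hy hne)

variable {C : Set E}

theorem mem_take_of_precC (hstab : ∀ X e, bund X e → ∀ e1 ∈ X, ∀ e2 ∈ X, e1 ≠ e2 → conf e1 e2)
    (hσ : IsTrace (ben conf bund) σ) (hC : C ⊆ {x | x ∈ σ}) {a c : E}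
    (hac : precC bund C a c) {i : ℕ} (hc : c ∈ σ.take i) : a ∈ σ.take i := by
  obtain ⟨haC, -, X, haX, hXc⟩ := hac
  obtain ⟨q, hq, rfl⟩ := List.mem_take_iff_getElem.mp hc
  obtain ⟨x, hxX, hxq⟩ := (hσ ⟨q, by omega⟩).2.1 X hXc
  obtain rfl : x = a :=
    hσ.eq_of_mem_of_bundle hstab hXc hxX haX (List.mem_of_mem_take hxq) (hC haC)
  exact List.take_subset_take_left σ (Nat.lt_min.mp hq).1.le hxq

theorem mem_take_of_preC (hstab : ∀ X e, bund X e → ∀ e1 ∈ X, ∀ e2 ∈ X, e1 ≠ e2 → conf e1 e2)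
    (hσ : IsTrace (ben conf bund) σ) (hC : C ⊆ {x | x ∈ σ}) {e b : E}
    (heb : preC bund C e b) {i : ℕ} (hb : b ∈ σ.take i) : e ∈ σ.take i := by
  induction heb using Relation.ReflTransGen.head_induction_on with
  | refl => exact hb
  | head hac _ ih => exact hσ.mem_take_of_precC hstab hC hac ih

theorem notMem_ben_of_preC
    (hstab : ∀ X e, bund X e → ∀ e1 ∈ X, ∀ e2 ∈ X, e1 ≠ e2 → conf e1 e2)
    (hσ : IsTrace (ben conf bund) σ) (hC : C ⊆ {x | x ∈ σ}) {e b : E} (hne : e ≠ b)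
    (heb : preC bund C e b) {i : ℕ} (he : e ∈ ben conf bund (σ.take i)) :
    b ∉ ben conf bund (σ.take i) := by
  intro hb
  obtain rfl | ⟨a, hea, haC, -, X, haX, hXb⟩ := heb.cases_tail
  · exact hne rfl
  obtain ⟨x, hxX, hxi⟩ := hb.2.1 X hXb
  obtain rfl : x = a :=
    hσ.eq_of_mem_of_bundle hstab hXb hxX haX (List.mem_of_mem_take hxi) (hC haC)
  exact he.1 (hσ.mem_take_of_preC hstab hC hea hxi)

end IsTrace

theorem pbes_priority_ignorance_general {E : Type*} (conf : E → E → Prop)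
    (bund : Set E → E → Prop) (prio : E → E → Prop)
    (hstab : ∀ X e, bund X e → ∀ e1 ∈ X, ∀ e2 ∈ X, e1 ≠ e2 → conf e1 e2)
    (C : Set E) :
    {σ : List E | (IsTrace (ben conf bund) σ ∧ PrioOK (ben conf bund) prio σ) ∧
        {x | x ∈ σ} = C} =
      {σ : List E | (IsTrace (ben conf bund) σ ∧
          PrioOK (ben conf bund)
            (fun e e' => prio e e' ∧ ¬ (preC bund C e' e ∨ preC bund C e e')) σ) ∧
        {x | x ∈ σ} = C} := by
  ext σ
  refine ⟨fun ⟨⟨hσ, hprio⟩, hσC⟩ => ⟨⟨hσ, fun i hi j h hne hj hh hjh => ?_⟩, hσC⟩,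
    fun ⟨⟨hσ, hprio⟩, hσC⟩ => ⟨⟨hσ, fun i hi j h hne hj hh hjh => ?_⟩, hσC⟩⟩
  · exact hprio i hi j h hne hj hh hjh.1
  · have hC : C ⊆ {x | x ∈ σ} := hσC.ge
    refine hprio i hi j h hne hj hh ⟨hjh, ?_⟩
    rintro (hpre | hpre)
    · exact hσ.notMem_ben_of_preC hstab hC hne hpre hj hh
    · exact hσ.notMem_ben_of_preC hstab hC (Ne.symm hne) hpre hh hj

/-- with respect to a configuration `C` of a BES, priority pairs between
events related by the precedence partial order `⪯_C` (in either direction) can be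
ignored without changing the traces over `C`. -/
theorem pbes_priority_ignorance {E : Type*} (conf : E → E → Prop)
    (bund : Set E → E → Prop) (prio : E → E → Prop)
    (hirr : ∀ e, ¬ conf e e) (hsym : ∀ e e', conf e e' → conf e' e)
    (hstab : ∀ X e, bund X e → ∀ e1 ∈ X, ∀ e2 ∈ X, e1 ≠ e2 → conf e1 e2)
    (hacyc : ∀ e, ¬ Relation.TransGen prio e e)
    (C : Set E) (hC : ∃ σ : List E, IsTrace (ben conf bund) σ ∧ {e | e ∈ σ} = C) :
    {σ : List E | (IsTrace (ben conf bund) σ ∧ PrioOK (ben conf bund) prio σ) ∧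
        {x | x ∈ σ} = C} =
      {σ : List E | (IsTrace (ben conf bund) σ ∧
          PrioOK (ben conf bund)
            (fun e e' => prio e e' ∧ ¬ (preC bund C e' e ∨ preC bund C e e')) σ) ∧
        {x | x ∈ σ} = C} :=
  pbes_priority_ignorance_general conf bund prio hstab C
end

section
/- There exists a prioritized Dual Event Structure (Δ, ◁) with a bundle X ↦ e and an event c ∈ X and priority pair c ◁ e such that the traces of (Δ, ◁) differ from the traces of (Δ, ◁ ∖ {(c,e)}). (In Dual Event Structures, priority pairs between an event and a member of one of its bundle sets are not in general redundant, in contrast to Bundle Event Structures.) Concretely, the structure with events {a,b,c,d}, empty conflict, bundles {a,b} ↦ d and {b,c} ↦ d, and priority c ◁ d witnesses this: the sequence a b c d is a trace without the priority pair but not with it. -/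
theorem prioOK_of_forall_not {E : Type*} {en : List E → Set E} {prio : E → E → Prop}
    (hprio : ∀ a b, ¬ prio a b) (σ : List E) : PrioOK en prio σ :=
  fun _ _ j h _ _ _ hp => (hprio (σ.get h) (σ.get j) hp).elim

theorem Relation.transGen_pair_iff {α : Type*} {c e x y : α} :
    Relation.TransGen (fun a b => a = c ∧ b = e) x y ↔ x = c ∧ y = e := by
  refine ⟨fun h => ?_, fun h => .single h⟩
  induction h with
  | single h => exact h
  | tail _ h ih => exact ⟨ih.1, h.2⟩

namespace PriorityCounterexample

-- The events `a b c d` of the paper are `0 1 2 3`; `b` lies in both bundles of `d`.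

def conf : Fin 4 → Fin 4 → Prop := fun _ _ => False

def bund : Set (Fin 4) → Fin 4 → Prop :=
  fun X e => (X = {0, 1} ∨ X = {1, 2}) ∧ e = 3

def prio : Fin 4 → Fin 4 → Prop := fun a b => a = 2 ∧ b = 3

theorem mem_ben {e : Fin 4} {σ : List (Fin 4)} (he : e ∉ σ) (hd : e = 3 → 1 ∈ σ) :
    e ∈ ben conf bund σ := by
  refine ⟨he, ?_, fun ⟨_, _, hconf⟩ => hconf⟩
  rintro X ⟨hX, rfl⟩
  exact ⟨1, by rcases hX with rfl | rfl <;> simp, hd rfl⟩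

theorem isTrace_abcd : IsTrace (ben conf bund) [0, 1, 2, 3] := by
  intro i
  fin_cases i <;> exact mem_ben (by decide) (by decide)

-- After `a b`, both `c` and `d` are enabled, so `c ◁ d` forces `d` before `c`.
theorem not_prioOK_abcd : ¬ PrioOK (ben conf bund) prio [0, 1, 2, 3] := by
  intro hprio
  have hlt := hprio 2 (by norm_num) ⟨3, by norm_num⟩ ⟨2, by norm_num⟩ (by decide)
    (mem_ben (σ := [0, 1]) (by decide) (by decide))
    (mem_ben (σ := [0, 1]) (by decide) (by decide)) ⟨rfl, rfl⟩
  exact absurd hlt (by decide)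

end PriorityCounterexample

open PriorityCounterexample in
/-- in Dual Event Structures (BESs without the stability condition),
priority pairs between an event and a member of one of its bundle sets are not in
general redundant: there is a prioritized DES with a bundle `X ↦ e`, an event
`c ∈ X`, and priority `c ◁ e`, whose traces change when the pair `(c, e)` is removed. -/
theorem pdes_bundle_priority_not_redundant :
    ∃ (conf : Fin 4 → Fin 4 → Prop) (bund : Set (Fin 4) → Fin 4 → Prop)
      (prio : Fin 4 → Fin 4 → Prop) (X : Set (Fin 4)) (c e : Fin 4),
      (∀ a, ¬ conf a a) ∧ (∀ a b, conf a b → conf b a) ∧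
      (∀ a, ¬ Relation.TransGen prio a a) ∧
      bund X e ∧ c ∈ X ∧ prio c e ∧
      {σ : List (Fin 4) | IsTrace (ben conf bund) σ ∧ PrioOK (ben conf bund) prio σ} ≠
        {σ : List (Fin 4) | IsTrace (ben conf bund) σ ∧
          PrioOK (ben conf bund) (fun a b => prio a b ∧ ¬ (a = c ∧ b = e)) σ} := by
  refine ⟨conf, bund, prio, {1, 2}, 2, 3, fun _ => id, fun _ _ => id,
    fun a h => ?_, ⟨Or.inr rfl, rfl⟩, by simp, ⟨rfl, rfl⟩, ?_⟩
  · obtain ⟨rfl, h⟩ := Relation.transGen_pair_iff.mp h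
    exact absurd h (by decide)
  · refine Ne.symm (ne_of_mem_of_not_mem' (a := [0, 1, 2, 3]) ?_ ?_)
    · exact ⟨isTrace_abcd, prioOK_of_forall_not (fun _ _ h => h.2 h.1) _⟩
    · exact fun h => not_prioOK_abcd h.2
end
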